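/- arXiv:2105.14590 — 4 statements merged into one kernel-verified Lean document; each statement's English description precedes it below -/
import Mathlib

section
/- Let A_n be a sequence of random functions on the real line such that, for each n, h ↦ A_n(h) is concave almost surely, and suppose A_n admits the decomposition A_n(h) = U_n·h − (1/2)·h²·V + r_n(h), where V is a (deterministic) positive real number, U_n is a sequence of real-valued random variables converging in distribution to a random variable U, and for each fixed h the remainder r_n(h) converges to 0 in probability as n → ∞. Then the argmax α_n = argmax_{h∈ℝ} A_n(h) converges in distribution to V⁻¹·U. -/
/-!
Write `c = V⁻¹ * u` for the vertex of `h ↦ u * h - h ^ 2 * V / 2`. Along a step of length `δ`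
ending at or before `c` this quadratic increases by at least `V * δ ^ 2 / 2`, and along one
starting at or after `c` it decreases by as much; so a remainder below `V * δ ^ 2 / 4` at the
grid points `k * δ` near `c` cannot reverse these comparisons, and concavity then traps every
maximiser within `2 * δ` of `c`. When `|U n| ≤ M` only the finitely many grid points with
`|k| ≤ ⌈M / (V * δ)⌉ + 2` matter; tightness of `(U n)` and the convergence in probability of
`r n` at these points make `α n - V⁻¹ * U n → 0` in probability, and Slutsky's lemma hands the
convergence in distribution of `V⁻¹ * U n` over to `α n`.
-/

open MeasureTheory ProbabilityTheory Filter Topology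

/-- Convergence in distribution of a sequence of real-valued random variables on `(Ω, μ)`
to a limiting law `ν` on `ℝ`: weak convergence of the laws, expressed via bounded
continuous test functions. -/
def TendstoInDistribution {Ω : Type*} [MeasurableSpace Ω] (μ : Measure Ω)
    (X : ℕ → Ω → ℝ) (ν : Measure ℝ) : Prop :=
  ∀ g : ℝ → ℝ, Continuous g → (∃ C, ∀ x, |g x| ≤ C) →
    Tendsto (fun n => ∫ ω, g (X n ω) ∂μ) atTop (𝓝 (∫ x, g x ∂ν))

open Set

namespace ConcaveOn

variable {f : ℝ → ℝ} {a b α : ℝ}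

theorem lt_of_isMaxOn_of_apply_lt (hf : ConcaveOn ℝ univ f) (hα : IsMaxOn f univ α)
    (hab : a < b) (hfab : f a < f b) : a < α := by
  by_contra! hαa
  have hmin : min (f α) (f b) ≤ f a :=
    hf.ge_on_segment (mem_univ _) (mem_univ _) (Icc_subset_segment ⟨hαa, hab.le⟩)
  rw [min_eq_right (hα (mem_univ b))] at hmin
  exact hmin.not_gt hfab

theorem lt_of_isMaxOn_of_apply_gt (hf : ConcaveOn ℝ univ f) (hα : IsMaxOn f univ α)
    (hab : a < b) (hfab : f b < f a) : α < b := by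
  by_contra! hbα
  have hmin : min (f a) (f α) ≤ f b :=
    hf.ge_on_segment (mem_univ _) (mem_univ _) (Icc_subset_segment ⟨hab.le, hbα⟩)
  rw [min_eq_left (hα (mem_univ a))] at hmin
  exact hmin.not_gt hfab

end ConcaveOn

section PerturbedQuadratic

variable {r : ℝ → ℝ} {u V δ a : ℝ}

lemma perturbedQuadratic_step (u V : ℝ) (r : ℝ → ℝ) (a δ : ℝ) :
    (u * (a + δ) - 1 / 2 * (a + δ) ^ 2 * V + r (a + δ)) - (u * a - 1 / 2 * a ^ 2 * V + r a)
      = δ * (u - V * (a + δ / 2)) + (r (a + δ) - r a) := by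
  ring

theorem perturbedQuadratic_lt_of_le_vertex (hδ : 0 < δ) (hvertex : V * (a + δ) ≤ u)
    (hra : |r a| < V * δ ^ 2 / 4) (hrb : |r (a + δ)| < V * δ ^ 2 / 4) :
    u * a - 1 / 2 * a ^ 2 * V + r a < u * (a + δ) - 1 / 2 * (a + δ) ^ 2 * V + r (a + δ) := by
  have hslope : V * δ ^ 2 / 2 ≤ δ * (u - V * (a + δ / 2)) := by nlinarith
  have := perturbedQuadratic_step u V r a δ
  linarith [le_abs_self (r a), neg_abs_le (r (a + δ))]

theorem perturbedQuadratic_lt_of_vertex_le (hδ : 0 < δ) (hvertex : u ≤ V * a)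
    (hra : |r a| < V * δ ^ 2 / 4) (hrb : |r (a + δ)| < V * δ ^ 2 / 4) :
    u * (a + δ) - 1 / 2 * (a + δ) ^ 2 * V + r (a + δ) < u * a - 1 / 2 * a ^ 2 * V + r a := by
  have hslope : δ * (u - V * (a + δ / 2)) ≤ -(V * δ ^ 2 / 2) := by nlinarith
  have := perturbedQuadratic_step u V r a δ
  linarith [neg_abs_le (r a), le_abs_self (r (a + δ))]

theorem abs_sub_lt_of_isMaxOn_perturbedQuadratic {f : ℝ → ℝ} {α : ℝ} (hV : 0 < V)
    (hδ : 0 < δ) (hf : ConcaveOn ℝ univ f) (hfr : ∀ h, f h = u * h - 1 / 2 * h ^ 2 * V + r h)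
    (hα : IsMaxOn f univ α)
    (hr : ∀ k : ℤ, |k * δ - V⁻¹ * u| < 2 * δ → |r (k * δ)| < V * δ ^ 2 / 4) :
    |α - V⁻¹ * u| < 2 * δ := by
  set c := V⁻¹ * u with hc
  have hu : u = V * c := by rw [hc, mul_inv_cancel_left₀ hV.ne']
  have hstep (k : ℤ) (hk : |k * δ - c| < 2 * δ) (hk' : |k * δ + δ - c| < 2 * δ) :
      |r (k * δ)| < V * δ ^ 2 / 4 ∧ |r (k * δ + δ)| < V * δ ^ 2 / 4 :=
    ⟨hr k hk, by simpa [add_mul] using hr (k + 1) (by push_cast; rwa [add_mul, one_mul])⟩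
  have hfloor : ⌊c / δ⌋ * δ ≤ c ∧ c < ⌊c / δ⌋ * δ + δ :=
    ⟨(le_div_iff₀ hδ).1 (Int.floor_le _),
      by linarith [(div_lt_iff₀ hδ).1 (Int.lt_floor_add_one (c / δ))]⟩
  have hceil : ⌈c / δ⌉ * δ - δ < c ∧ c ≤ ⌈c / δ⌉ * δ :=
    ⟨by linarith [(lt_div_iff₀ hδ).1 (by linarith [Int.ceil_lt_add_one (c / δ)] :
        (⌈c / δ⌉ - 1 : ℝ) < c / δ)],
      (div_le_iff₀ hδ).1 (Int.le_ceil _)⟩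
  rw [abs_sub_lt_iff]
  constructor
  · obtain ⟨hra, hrb⟩ := hstep ⌈c / δ⌉ (abs_sub_lt_iff.2 ⟨by linarith, by linarith⟩)
      (abs_sub_lt_iff.2 ⟨by linarith, by linarith⟩)
    have hlt := hf.lt_of_isMaxOn_of_apply_gt hα (lt_add_of_pos_right _ hδ) (by
      rw [hfr, hfr]
      exact perturbedQuadratic_lt_of_vertex_le hδ (by rw [hu]; nlinarith) hra hrb)
    linarith
  · obtain ⟨hra, hrb⟩ := hstep (⌊c / δ⌋ - 1)
      (abs_sub_lt_iff.2 ⟨by push_cast; linarith, by push_cast; linarith⟩)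
      (abs_sub_lt_iff.2 ⟨by push_cast; linarith, by push_cast; linarith⟩)
    have hlt := hf.lt_of_isMaxOn_of_apply_lt hα (lt_add_of_pos_right _ hδ) (by
      rw [hfr, hfr]
      exact perturbedQuadratic_lt_of_le_vertex hδ (by rw [hu]; push_cast; nlinarith) hra hrb)
    push_cast at hlt
    linarith

theorem int_mem_Icc_of_abs_mul_sub_lt {M : ℝ} {k : ℤ} (hV : 0 < V) (hδ : 0 < δ)
    (hu : |u| ≤ M) (hk : |k * δ - V⁻¹ * u| < 2 * δ) :
    k ∈ Finset.Icc (-(⌈M / (V * δ)⌉ + 2)) (⌈M / (V * δ)⌉ + 2) := by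
  have hc : |V⁻¹ * u| ≤ M / V := by
    rw [abs_mul, abs_inv, abs_of_pos hV, inv_mul_eq_div]
    exact div_le_div_of_nonneg_right hu hV.le
  have hkδ : |(k : ℝ)| * δ < M / V + 2 * δ := by
    rw [← abs_of_pos hδ, ← abs_mul, abs_of_pos hδ]
    linarith [abs_sub_abs_le_abs_sub ((k : ℝ) * δ) (V⁻¹ * u)]
  have hk' : |(k : ℝ)| < ⌈M / (V * δ)⌉ + 2 := by
    have : |(k : ℝ)| < (M / V + 2 * δ) / δ := (lt_div_iff₀ hδ).2 hkδ
    rw [add_div, mul_div_cancel_right₀ _ hδ.ne', div_div] at this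
    linarith [Int.le_ceil (M / (V * δ))]
  rw [Finset.mem_Icc, ← abs_le]
  exact_mod_cast hk'.le

end PerturbedQuadratic

theorem Filter.Tendsto.isTightMeasureSet_range {E : Type*} [MeasurableSpace E]
    [PseudoMetricSpace E] [BorelSpace E] [SecondCountableTopology E] [CompleteSpace E]
    {μs : ℕ → ProbabilityMeasure E} {μ : ProbabilityMeasure E} (h : Tendsto μs atTop (𝓝 μ)) :
    IsTightMeasureSet (range fun n => (μs n : Measure E)) := by
  have hcomp := h.isCompact_insert_range
  refine (isTightMeasureSet_of_isCompact_closure (hcomp.isClosed.closure_eq ▸ hcomp)).subset ?_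
  rintro _ ⟨n, rfl⟩
  exact ⟨μs n, mem_insert_of_mem _ (mem_range_self n), rfl⟩

theorem MeasureTheory.TendstoInDistribution.exists_measure_norm_gt_le {Ω Ω' E : Type*}
    [MeasurableSpace Ω] [MeasurableSpace Ω'] [MeasurableSpace E] [NormedAddCommGroup E]
    [BorelSpace E] [SecondCountableTopology E] [CompleteSpace E]
    {μ : Measure Ω} [IsProbabilityMeasure μ] {μ' : Measure Ω'} [IsProbabilityMeasure μ']
    {X : ℕ → Ω → E} {Z : Ω' → E} (h : TendstoInDistribution X atTop Z (fun _ => μ) μ')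
    {η : ENNReal} (hη : 0 < η) : ∃ M : ℝ, ∀ n, μ {ω | M < ‖X n ω‖} ≤ η := by
  have htight := tendsto_measure_norm_gt_of_isTightMeasureSet h.tendsto.isTightMeasureSet_range
  obtain ⟨M, hM⟩ := ENNReal.tendsto_atTop_zero.1 htight η hη
  refine ⟨M, fun n => le_trans ?_ (hM M le_rfl)⟩
  calc μ {ω | M < ‖X n ω‖} = μ.map (X n) {x | M < ‖x‖} :=
        (Measure.map_apply_of_aemeasurable (h.forall_aemeasurable n)
          (measurableSet_lt measurable_const measurable_norm)).symm
    _ ≤ _ := le_iSup₂_of_le (f := fun (ν : Measure E) (_ : ν ∈ range _) => ν {x | M < ‖x‖})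
          _ ⟨n, rfl⟩ le_rfl

theorem tendstoInDistribution_map_iff {Ω : Type*} [MeasurableSpace Ω] {μ : Measure Ω}
    [IsProbabilityMeasure μ] {X : ℕ → Ω → ℝ} {Z : Ω → ℝ} (hX : ∀ n, Measurable (X n))
    (hZ : Measurable Z) :
    _root_.TendstoInDistribution μ X (μ.map Z) ↔
      MeasureTheory.TendstoInDistribution X atTop Z (fun _ => μ) μ := by
  have hint (Y : Ω → ℝ) (hY : Measurable Y) (g : ℝ → ℝ) (hg : Continuous g) :
      ∫ x, g x ∂(μ.map Y) = ∫ ω, g (Y ω) ∂μ :=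
    integral_map hY.aemeasurable hg.aestronglyMeasurable
  refine ⟨fun h => ⟨fun n => (hX n).aemeasurable, hZ.aemeasurable, ?_⟩, fun h g hg hbdd => ?_⟩
  · refine ProbabilityMeasure.tendsto_iff_forall_integral_tendsto.2 fun f => ?_
    simp only [ProbabilityMeasure.coe_mk, hint _ (hX _) f f.continuous]
    exact h f f.continuous ⟨‖f‖, fun x => f.norm_coe_le_norm x⟩
  · obtain ⟨C, hC⟩ := hbdd
    have := ProbabilityMeasure.tendsto_iff_forall_integral_tendsto.1 h.tendsto
      (BoundedContinuousFunction.ofNormedAddCommGroup g hg C hC)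
    simpa only [ProbabilityMeasure.coe_mk, BoundedContinuousFunction.coe_ofNormedAddCommGroup,
      hint _ (hX _) g hg] using this

theorem tendstoInMeasure_argmax_sub_vertex {Ω : Type*} [MeasurableSpace Ω] {μ : Measure Ω}
    {A r : ℕ → Ω → ℝ → ℝ} {U α : ℕ → Ω → ℝ} {V : ℝ} (hV : 0 < V)
    (hA : ∀ n, ∀ᵐ ω ∂μ, ConcaveOn ℝ univ (A n ω))
    (hAr : ∀ n ω h, A n ω h = U n ω * h - 1 / 2 * h ^ 2 * V + r n ω h)
    (hU : ∀ η : ENNReal, 0 < η → ∃ M : ℝ, ∀ n, μ {ω | M < |U n ω|} ≤ η)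
    (hr : ∀ h ε : ℝ, 0 < ε → Tendsto (fun n => μ {ω | ε < |r n ω h|}) atTop (𝓝 0))
    (hα : ∀ n, ∀ᵐ ω ∂μ, IsMaxOn (A n ω) univ (α n ω)) :
    TendstoInMeasure μ (fun n ω => α n ω - V⁻¹ * U n ω) atTop 0 := by
  rw [tendstoInMeasure_iff_norm]
  intro ε hε
  obtain ⟨δ, hδ, rfl⟩ : ∃ δ, 0 < δ ∧ ε = 2 * δ := ⟨ε / 2, half_pos hε, by ring⟩
  rw [ENNReal.tendsto_nhds_zero]
  intro η hη
  obtain ⟨M, hM⟩ := hU (η / 2) (ENNReal.half_pos hη.ne')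
  set S := Finset.Icc (-(⌈M / (V * δ)⌉ + 2)) (⌈M / (V * δ)⌉ + 2)
  set B : ℕ → ℤ → Set Ω := fun n k => {ω | V * δ ^ 2 / 8 < |r n ω (k * δ)|}
  have hB : Tendsto (fun n => ∑ k ∈ S, μ (B n k)) atTop (𝓝 0) := by
    simpa using tendsto_finsetSum S fun k _ => hr (k * δ) _ (by positivity)
  filter_upwards [ENNReal.tendsto_nhds_zero.1 hB (η / 2) (ENNReal.half_pos hη.ne')] with n hn
  set N := {ω | ¬(ConcaveOn ℝ univ (A n ω) ∧ IsMaxOn (A n ω) univ (α n ω))}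
  have hN : μ N = 0 := ae_iff.1 ((hA n).and (hα n))
  have hsub : {ω | 2 * δ ≤ ‖α n ω - V⁻¹ * U n ω - 0‖} ⊆
      N ∪ ({ω | M < |U n ω|} ∪ ⋃ k ∈ S, B n k) := by
    intro ω hω
    by_contra hgood
    simp only [mem_union, mem_iUnion, mem_ofPred_eq, not_or, not_exists, not_lt, not_not, N,
      B] at hgood
    obtain ⟨⟨hconc, hmax⟩, hUω, hrω⟩ := hgood
    have hclose := abs_sub_lt_of_isMaxOn_perturbedQuadratic hV hδ hconc (hAr n ω) hmax
      fun k hk => (hrω k (int_mem_Icc_of_abs_mul_sub_lt hV hδ hUω hk)).trans_lt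
        (by linarith [show 0 < V * δ ^ 2 by positivity])
    exact hclose.not_ge (by simpa using hω)
  calc μ {ω | 2 * δ ≤ ‖α n ω - V⁻¹ * U n ω - 0‖}
      ≤ μ N + (μ {ω | M < |U n ω|} + ∑ k ∈ S, μ (B n k)) := by
        refine (measure_mono hsub).trans ((measure_union_le _ _).trans (add_le_add le_rfl ?_))
        exact (measure_union_le _ _).trans (add_le_add le_rfl (measure_biUnion_finset_le _ _))
    _ ≤ 0 + (η / 2 + η / 2) := by gcongr; exacts [hN.le, hM n]
    _ = η := by rw [zero_add, ENNReal.add_halves]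

/-- **Hjort–Pollard basic corollary.** Let `A n` be random concave functions on `ℝ`
admitting the decomposition `A n ω h = U n ω * h - (1/2) * h ^ 2 * V + r n ω h` with `V > 0`
deterministic, `U n` converging in distribution to `Ulim`, and `r n · h → 0` in probability
for each fixed `h`. If `α n ω` maximizes `h ↦ A n ω h`, then `α n` converges in
distribution to `V⁻¹ * Ulim`. -/
theorem hjort_pollard_argmax_convergence
    {Ω : Type*} [MeasurableSpace Ω] (μ : Measure Ω) [IsProbabilityMeasure μ]
    (A : ℕ → Ω → ℝ → ℝ) (U : ℕ → Ω → ℝ) (r : ℕ → Ω → ℝ → ℝ)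
    (V : ℝ) (hV : 0 < V) (Ulim : Ω → ℝ)
    (hA_concave : ∀ n, ∀ᵐ ω ∂μ, ConcaveOn ℝ Set.univ (A n ω))
    (hdecomp : ∀ n, ∀ ω, ∀ h : ℝ,
      A n ω h = U n ω * h - (1 / 2) * h ^ 2 * V + r n ω h)
    (hU_meas : ∀ n, Measurable (U n)) (hUlim_meas : Measurable Ulim)
    (hU_dist : TendstoInDistribution μ U (μ.map Ulim))
    (hr_prob : ∀ h : ℝ, ∀ ε : ℝ, 0 < ε →
      Tendsto (fun n => μ {ω | ε < |r n ω h|}) atTop (𝓝 0))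
    (α : ℕ → Ω → ℝ) (hα_meas : ∀ n, Measurable (α n))
    (hα_max : ∀ n, ∀ᵐ ω ∂μ, ∀ h : ℝ, A n ω h ≤ A n ω (α n ω)) :
    TendstoInDistribution μ α (μ.map fun ω => V⁻¹ * Ulim ω) := by
  have hU := (tendstoInDistribution_map_iff hU_meas hUlim_meas).1 hU_dist
  have hUV : MeasureTheory.TendstoInDistribution (fun n ω => V⁻¹ * U n ω) atTop
      (fun ω => V⁻¹ * Ulim ω) (fun _ => μ) μ :=
    hU.continuous_comp (continuous_const_mul V⁻¹)
  have hαUV := tendstoInMeasure_argmax_sub_vertex hV hA_concave hdecomp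
    (fun η hη => hU.exists_measure_norm_gt_le hη) hr_prob
    (fun n => (hα_max n).mono fun ω hω h _ => hω h)
  refine (tendstoInDistribution_map_iff hα_meas (hUlim_meas.const_mul _)).2 ?_
  exact tendstoInDistribution_of_tendstoInMeasure_sub α _ hUV hαUV
    fun n => (hα_meas n).aemeasurable
end

section
/- For every integer m ≥ 1 and every r ∈ {1, …, m}, the function x ↦ 𝔹_(r)(x) = (1/r)·∑_{i=1}^{r} 𝔹(x, i, m+1−i) is log-concave on (0,1), i.e., x ↦ log 𝔹_(r)(x) is concave on (0,1). Moreover, the function x ↦ 1 − 𝔹_(r)(x) is also log-concave on (0,1). -/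
open Finset

/-- The Beta(i, m+1-i) cumulative distribution function evaluated at `x`. -/
noncomputable def betaCDF (m i : ℕ) (x : ℝ) : ℝ :=
  ∫ u in (0:ℝ)..x, (i : ℝ) * (m.choose i : ℝ) * u ^ (i - 1) * (1 - u) ^ (m - i)

/-- `𝔹_(r)(x) = (1/r) ∑_{i=1}^r 𝔹(x, i, m+1-i)`. -/
noncomputable def strataCDF (m r : ℕ) (x : ℝ) : ℝ :=
  (1 / r : ℝ) * ∑ i ∈ Finset.Icc 1 r, betaCDF m i x

/-!
Since `𝔹(x, i, m+1-i) = P(Bin(m, x) ≥ i)`, the complement `T = 1 - 𝔹_(r)` is an average of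
binomial CDFs, a polynomial in `x` with `T' = -(m/r) P(Bin(m-1, x) ≤ r-1)` and
`T'' = (m/r) (m-1) b_{m-2,r-1}(x) ≥ 0`, where `b_{n,ν}` are the Bernstein polynomials.
So `𝔹_(r) = 1 - T` is positive and concave, hence log-concave. For `T`, log-concavity means
`T'' T ≤ T'²`. Expanding both sides into products of Bernstein polynomials, every term on the
left is dominated by its own term on the right; this comes down to the log-concavity of the
binomial coefficients, `C(n,i) C(n,k) ≤ C(n,j) C(n,k-j+i)` for `i ≤ j ≤ k`.
-/

open Polynomial

namespace Nat

theorem choose_mul_choose_succ_le {n a c : ℕ} (h : a ≤ c) :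
    n.choose a * n.choose (c + 1) ≤ n.choose (a + 1) * n.choose c := by
  refine Nat.le_of_mul_le_mul_right (c := (a + 1) * (c + 1)) ?_ (by positivity)
  calc n.choose a * n.choose (c + 1) * ((a + 1) * (c + 1))
      = n.choose (c + 1) * (c + 1) * n.choose a * (a + 1) := by ring
    _ = n.choose a * n.choose c * ((a + 1) * (n - c)) := by
        rw [Nat.choose_succ_right_eq]; ring
    _ ≤ n.choose a * n.choose c * ((c + 1) * (n - a)) := by
        gcongr
    _ = n.choose (a + 1) * (a + 1) * n.choose c * (c + 1) := by
        rw [Nat.choose_succ_right_eq]; ring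
    _ = n.choose (a + 1) * n.choose c * ((a + 1) * (c + 1)) := by ring

theorem choose_mul_choose_add_le {n i c : ℕ} : ∀ {t : ℕ}, i + t ≤ c →
    n.choose i * n.choose (c + t) ≤ n.choose (i + t) * n.choose c
  | 0, _ => le_rfl
  | t + 1, h =>
    calc n.choose i * n.choose (c + (t + 1))
        = n.choose i * n.choose (c + 1 + t) := by rw [Nat.add_right_comm, Nat.add_assoc]
      _ ≤ n.choose (i + t) * n.choose (c + 1) := choose_mul_choose_add_le (by omega)
      _ ≤ n.choose (i + (t + 1)) * n.choose c := choose_mul_choose_succ_le (by omega)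

theorem choose_mul_choose_le_of_le {n i j k : ℕ} (hij : i ≤ j) (hjk : j ≤ k) :
    n.choose i * n.choose k ≤ n.choose j * n.choose (k - j + i) := by
  rcases le_total j (k - j + i) with h | h
  · simpa [show i + (j - i) = j by omega, show k - j + i + (j - i) = k by omega] using
      choose_mul_choose_add_le (n := n) (i := i) (t := j - i) (c := k - j + i) (by omega)
  · simpa [show i + (k - j) = k - j + i by omega, show j + (k - j) = k by omega, mul_comm] using
      choose_mul_choose_add_le (n := n) (i := i) (t := k - j) (c := j) (by omega)

theorem mul_choose_pred_mul_choose_succ_le {n i k : ℕ} (hik : i ≤ k) (hkn : k < n) :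
    n * (n - 1).choose k * (n + 1).choose i ≤ (n + 1) * (n.choose i * n.choose k) := by
  obtain ⟨n, rfl⟩ : ∃ n', n = n' + 1 := ⟨n - 1, by omega⟩
  refine Nat.le_of_mul_le_mul_right (c := n + 1 + 1 - i) ?_ (by omega)
  calc (n + 1) * n.choose k * (n + 1 + 1).choose i * (n + 1 + 1 - i)
      = (n.choose k * (n + 1)) * ((n + 1 + 1).choose i * (n + 1 + 1 - i)) := by ring
    _ = (n + 1).choose k * (n + 1).choose i * ((n + 1 - k) * (n + 1 + 1)) := by
        rw [Nat.choose_mul_succ_eq n k, ← Nat.choose_mul_succ_eq (n + 1) i]; ring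
    _ ≤ (n + 1).choose k * (n + 1).choose i * ((n + 1 + 1 - i) * (n + 1 + 1)) := by
        gcongr; omega
    _ = (n + 1 + 1) * ((n + 1).choose i * (n + 1).choose k) * (n + 1 + 1 - i) := by ring

end Nat

theorem concaveOn_log_of_hasDerivAt {s : Set ℝ} {f f' f'' : ℝ → ℝ} (hs : Convex ℝ s)
    (hso : IsOpen s) (hf : ∀ x ∈ s, HasDerivAt f (f' x) x)
    (hf' : ∀ x ∈ s, HasDerivAt f' (f'' x) x) (hpos : ∀ x ∈ s, 0 < f x)
    (h : ∀ x ∈ s, f'' x * f x ≤ f' x ^ 2) :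
    ConcaveOn ℝ s fun x => Real.log (f x) := by
  rw [← hso.interior_eq] at hf hf' hpos h
  refine concaveOn_of_hasDerivWithinAt2_nonpos hs (f' := fun x => f' x / f x)
    (f'' := fun x => (f'' x * f x - f' x * f' x) / f x ^ 2)
    (fun x hx => ?_) (fun x hx => ?_) (fun x hx => ?_) (fun x hx => ?_)
  · rw [hso.interior_eq] at hf hpos
    exact ((hf x hx).log (hpos x hx).ne').continuousAt.continuousWithinAt
  · exact ((hf x hx).log (hpos x hx).ne').hasDerivWithinAt
  · exact ((hf' x hx).div (hf x hx) (hpos x hx).ne').hasDerivWithinAt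
  · exact div_nonpos_of_nonpos_of_nonneg (by linarith [h x hx, sq (f' x)]) (sq_nonneg _)

/-- `P(Bin(n, x) ≤ k)`, as a polynomial in the success probability `x`. -/
noncomputable def binomialCDF (n k : ℕ) : ℝ[X] :=
  ∑ i ∈ range (k + 1), bernsteinPolynomial ℝ n i

theorem derivative_binomialCDF (n k : ℕ) :
    derivative (binomialCDF n k) = -(n : ℝ) • bernsteinPolynomial ℝ (n - 1) k := by
  induction k with
  | zero => simp [binomialCDF, bernsteinPolynomial.derivative_zero, smul_eq_C_mul]
  | succ k ih =>
    rw [binomialCDF, sum_range_succ, derivative_add, ← binomialCDF, ih,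
      bernsteinPolynomial.derivative_succ, smul_eq_C_mul, smul_eq_C_mul]
    simp only [map_neg, map_natCast]
    ring

theorem binomialCDF_eval_zero (n k : ℕ) : (binomialCDF n k).eval 0 = 1 := by
  simp [binomialCDF, eval_finsetSum, bernsteinPolynomial.eval_at_0]

theorem betaCDF_succ_eq_one_sub_binomialCDF (m i : ℕ) (x : ℝ) :
    betaCDF m (i + 1) x = 1 - (binomialCDF m i).eval x := by
  have hcoeff : (((i + 1 : ℕ) : ℝ) * m.choose (i + 1)) = m * (m - 1).choose i := by
    rcases m with _ | m
    · simp
    · exact_mod_cast ((Nat.add_one_mul_choose_eq m i).trans (mul_comm _ _)).symm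
  have hderiv : ∀ u ∈ Set.uIcc 0 x, HasDerivAt (fun u => 1 - (binomialCDF m i).eval u)
      (((i + 1 : ℕ) : ℝ) * m.choose (i + 1) * u ^ (i + 1 - 1) * (1 - u) ^ (m - (i + 1))) u := by
    intro u _
    refine (((binomialCDF m i).hasDerivAt u).const_sub 1).congr_deriv ?_
    rw [derivative_binomialCDF, hcoeff, Nat.add_sub_cancel]
    simp only [bernsteinPolynomial, eval_smul, eval_mul, eval_pow, eval_natCast, eval_X, eval_sub,
      eval_one, smul_eq_mul]
    rw [Nat.sub_sub m 1 i, add_comm 1 i]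
    ring
  rw [betaCDF, intervalIntegral.integral_eq_sub_of_hasDerivAt hderiv
    (Continuous.intervalIntegrable (by fun_prop) _ _), binomialCDF_eval_zero]
  ring

noncomputable def strataSurvival (m r : ℕ) : ℝ[X] :=
  (r : ℝ)⁻¹ • ∑ j ∈ range r, binomialCDF m j

theorem strataSurvival_eval (m : ℕ) {r : ℕ} (hr : 1 ≤ r) (x : ℝ) :
    (strataSurvival m r).eval x = 1 - strataCDF m r x := by
  have hr : (r : ℝ) ≠ 0 := by positivity
  rw [strataCDF, ← Ico_add_one_right_eq_Icc, sum_Ico_eq_sum_range, Nat.add_sub_cancel]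
  simp only [add_comm 1, betaCDF_succ_eq_one_sub_binomialCDF, sum_sub_distrib, sum_const,
    card_range, nsmul_eq_mul, mul_one, strataSurvival, eval_smul, eval_finsetSum, smul_eq_mul]
  field_simp
  ring

theorem derivative_strataSurvival (n k : ℕ) :
    derivative (strataSurvival (n + 1) (k + 1)) =
      -(((n : ℝ) + 1) / (k + 1)) • binomialCDF n k := by
  simp only [strataSurvival, derivative_smul, derivative_sum, derivative_binomialCDF,
    ← smul_sum, smul_smul, Nat.add_sub_cancel]
  rw [← binomialCDF]
  congr 1
  push_cast
  ring

theorem derivative_derivative_strataSurvival (n k : ℕ) :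
    derivative (derivative (strataSurvival (n + 1) (k + 1))) =
      ((((n : ℝ) + 1) / (k + 1)) * n) • bernsteinPolynomial ℝ (n - 1) k := by
  rw [derivative_strataSurvival, derivative_smul, derivative_binomialCDF, smul_smul, neg_mul_neg]

section Eval

variable {n : ℕ} {x : ℝ}

theorem bernsteinPolynomial_eval_nonneg (ν : ℕ) (hx0 : 0 ≤ x) (hx1 : x ≤ 1) :
    0 ≤ (bernsteinPolynomial ℝ n ν).eval x := by
  have : 0 ≤ 1 - x := by linarith
  simp only [bernsteinPolynomial, eval_mul, eval_pow, eval_natCast, eval_X, eval_sub, eval_one]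
  positivity

theorem bernsteinPolynomial_eval_mul {m ν μ : ℕ} (hν : ν ≤ n) (hμ : μ ≤ m) (x : ℝ) :
    (bernsteinPolynomial ℝ n ν).eval x * (bernsteinPolynomial ℝ m μ).eval x =
      (n.choose ν * m.choose μ : ℕ) * (x ^ (ν + μ) * (1 - x) ^ (n + m - (ν + μ))) := by
  simp only [bernsteinPolynomial, eval_mul, eval_pow, eval_natCast, eval_X, eval_sub, eval_one]
  rw [show n + m - (ν + μ) = (n - ν) + (m - μ) by omega]
  push_cast
  ring

theorem bernsteinPolynomial_eval_mul_le {i j k : ℕ} (hij : i ≤ j) (hjk : j ≤ k) (hkn : k < n)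
    (hx0 : 0 ≤ x) (hx1 : x ≤ 1) :
    n * ((bernsteinPolynomial ℝ (n - 1) k).eval x * (bernsteinPolynomial ℝ (n + 1) i).eval x) ≤
      (n + 1) * ((bernsteinPolynomial ℝ n j).eval x *
        (bernsteinPolynomial ℝ n (k - j + i)).eval x) := by
  have hcoeff : ((n * ((n - 1).choose k * (n + 1).choose i) : ℕ) : ℝ) ≤
      (((n + 1) * (n.choose j * n.choose (k - j + i)) : ℕ) : ℝ) := by
    rw [← mul_assoc]
    exact_mod_cast (Nat.mul_choose_pred_mul_choose_succ_le (hij.trans hjk) hkn).trans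
      (Nat.mul_le_mul_left _ (Nat.choose_mul_choose_le_of_le hij hjk))
  have : 0 ≤ 1 - x := by linarith
  rw [bernsteinPolynomial_eval_mul (by omega) (by omega),
    bernsteinPolynomial_eval_mul (by omega) (by omega), show j + (k - j + i) = k + i by omega,
    show n - 1 + (n + 1) = n + n by omega]
  calc _ = ((n * ((n - 1).choose k * (n + 1).choose i) : ℕ) : ℝ) *
        (x ^ (k + i) * (1 - x) ^ (n + n - (k + i))) := by push_cast; ring
    _ ≤ (((n + 1) * (n.choose j * n.choose (k - j + i)) : ℕ) : ℝ) *
        (x ^ (k + i) * (1 - x) ^ (n + n - (k + i))) := by gcongr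
    _ = _ := by push_cast; ring

theorem binomialCDF_eval_pos (k : ℕ) (hx0 : 0 ≤ x) (hx1 : x < 1) :
    0 < (binomialCDF n k).eval x := by
  have : 0 < 1 - x := by linarith
  rw [binomialCDF, eval_finsetSum]
  refine sum_pos' (fun i _ => bernsteinPolynomial_eval_nonneg i hx0 hx1.le) ⟨0, by simp, ?_⟩
  simpa [bernsteinPolynomial] using pow_pos this n

theorem binomialCDF_eval_lt_one {k : ℕ} (hkn : k < n) (hx0 : 0 < x) (hx1 : x ≤ 1) :
    (binomialCDF n k).eval x < 1 := by
  have hsum : ∑ i ∈ range (n + 1), (bernsteinPolynomial ℝ n i).eval x = 1 := by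
    rw [← eval_finsetSum, bernsteinPolynomial.sum, eval_one]
  rw [← hsum, binomialCDF, eval_finsetSum]
  refine sum_lt_sum_of_subset (range_subset_range.2 (by omega)) (mem_range.2 n.lt_succ_self)
    (by simpa using hkn) ?_ fun i _ _ => bernsteinPolynomial_eval_nonneg i hx0.le hx1
  simpa [bernsteinPolynomial] using pow_pos hx0 n

theorem mul_sum_binomialCDF_le_sq {k : ℕ} (hkn : k ≤ n) (hx0 : 0 ≤ x) (hx1 : x ≤ 1) :
    n * (bernsteinPolynomial ℝ (n - 1) k).eval x *
        ∑ j ∈ range (k + 1), (binomialCDF (n + 1) j).eval x ≤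
      (n + 1) * (binomialCDF n k).eval x ^ 2 := by
  obtain rfl | hkn := hkn.eq_or_lt
  · have : (k : ℝ) * (bernsteinPolynomial ℝ (k - 1) k).eval x = 0 := by
      rcases k with _ | k
      · simp
      · simp [bernsteinPolynomial.eq_zero_of_lt]
    rw [this, zero_mul]
    positivity
  have hb (p i : ℕ) := bernsteinPolynomial_eval_nonneg (n := p) i hx0 hx1
  have hshift : ∀ j ∈ range (k + 1),
      ∑ i ∈ range (j + 1), (bernsteinPolynomial ℝ n (k - j + i)).eval x ≤
        (binomialCDF n k).eval x := by
    intro j hj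
    have hj : j ≤ k := Nat.lt_succ_iff.1 (mem_range.1 hj)
    rw [binomialCDF, eval_finsetSum, ← show k + 1 - (k - j) = j + 1 by omega,
      ← sum_Ico_eq_sum_range fun i => (bernsteinPolynomial ℝ n i).eval x, range_eq_Ico]
    exact sum_le_sum_of_subset_of_nonneg (Ico_subset_Ico_left (Nat.zero_le _))
      fun i _ _ => hb n i
  calc _ = ∑ j ∈ range (k + 1), ∑ i ∈ range (j + 1),
        n * ((bernsteinPolynomial ℝ (n - 1) k).eval x *
          (bernsteinPolynomial ℝ (n + 1) i).eval x) := by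
        simp only [binomialCDF, eval_finsetSum, mul_sum, mul_assoc]
    _ ≤ ∑ j ∈ range (k + 1), ∑ i ∈ range (j + 1),
        (n + 1) * ((bernsteinPolynomial ℝ n j).eval x *
          (bernsteinPolynomial ℝ n (k - j + i)).eval x) := by
        refine sum_le_sum fun j hj => sum_le_sum fun i hi => ?_
        exact bernsteinPolynomial_eval_mul_le (Nat.lt_succ_iff.1 (mem_range.1 hi))
          (Nat.lt_succ_iff.1 (mem_range.1 hj)) hkn hx0 hx1
    _ = (n + 1) * ∑ j ∈ range (k + 1), (bernsteinPolynomial ℝ n j).eval x *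
          ∑ i ∈ range (j + 1), (bernsteinPolynomial ℝ n (k - j + i)).eval x := by
        simp only [mul_sum]
    _ ≤ (n + 1) * ∑ j ∈ range (k + 1), (bernsteinPolynomial ℝ n j).eval x *
          (binomialCDF n k).eval x := by
        gcongr with j hj
        · exact hb n j
        · exact hshift j hj
    _ = _ := by rw [← sum_mul, ← eval_finsetSum, ← binomialCDF, sq]

theorem strataSurvival_eval_pos (m : ℕ) {r : ℕ} (hr : 1 ≤ r) (hx0 : 0 ≤ x) (hx1 : x < 1) :
    0 < (strataSurvival m r).eval x := by
  rw [strataSurvival, eval_smul, eval_finsetSum, smul_eq_mul]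
  exact mul_pos (by positivity)
    (sum_pos (fun j _ => binomialCDF_eval_pos j hx0 hx1) (nonempty_range_iff.2 (by omega)))

theorem strataSurvival_eval_lt_one {m r : ℕ} (hr : 1 ≤ r) (hrm : r ≤ m) (hx0 : 0 < x)
    (hx1 : x ≤ 1) : (strataSurvival m r).eval x < 1 := by
  have hsum : ∑ j ∈ range r, (binomialCDF m j).eval x < r := by
    simpa using sum_lt_sum_of_nonempty (nonempty_range_iff.2 (by omega))
      fun j hj => binomialCDF_eval_lt_one ((mem_range.1 hj).trans_le hrm) hx0 hx1
  rw [strataSurvival, eval_smul, eval_finsetSum, smul_eq_mul, inv_mul_lt_one₀ (by positivity)]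
  exact hsum

theorem derivative_derivative_strataSurvival_eval_mul_le {k : ℕ} (hkn : k ≤ n) (hx0 : 0 ≤ x)
    (hx1 : x ≤ 1) :
    (derivative (derivative (strataSurvival (n + 1) (k + 1)))).eval x *
        (strataSurvival (n + 1) (k + 1)).eval x ≤
      ((derivative (strataSurvival (n + 1) (k + 1))).eval x) ^ 2 := by
  have key := mul_sum_binomialCDF_le_sq hkn hx0 hx1
  rw [derivative_derivative_strataSurvival, derivative_strataSurvival, strataSurvival]
  simp only [eval_smul, eval_finsetSum, smul_eq_mul]
  calc _ = ((n : ℝ) + 1) / (k + 1) ^ 2 * (n * (bernsteinPolynomial ℝ (n - 1) k).eval x *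
        ∑ j ∈ range (k + 1), (binomialCDF (n + 1) j).eval x) := by
        push_cast; field_simp
    _ ≤ ((n : ℝ) + 1) / (k + 1) ^ 2 * ((n + 1) * (binomialCDF n k).eval x ^ 2) := by
        gcongr
    _ = _ := by field_simp

end Eval

theorem strataCDF_log_concave_general (m : ℕ) (r : ℕ) (hr : 1 ≤ r) (hrm : r ≤ m) :
    ConcaveOn ℝ (Set.Ioo 0 1) (fun x => Real.log (strataCDF m r x)) ∧
    ConcaveOn ℝ (Set.Ioo 0 1) (fun x => Real.log (1 - strataCDF m r x)) := by
  obtain ⟨n, rfl⟩ : ∃ n, m = n + 1 := ⟨m - 1, by omega⟩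
  obtain ⟨k, rfl⟩ : ∃ k, r = k + 1 := ⟨r - 1, by omega⟩
  set T := strataSurvival (n + 1) (k + 1)
  have hF (x : ℝ) : strataCDF (n + 1) (k + 1) x = 1 - T.eval x := by
    rw [strataSurvival_eval _ hr]; ring
  have hT0 (x : ℝ) (hx : x ∈ Set.Ioo (0 : ℝ) 1) : 0 < T.eval x :=
    strataSurvival_eval_pos _ hr hx.1.le hx.2
  have hT1 (x : ℝ) (hx : x ∈ Set.Ioo (0 : ℝ) 1) : T.eval x < 1 :=
    strataSurvival_eval_lt_one hr hrm hx.1 hx.2.le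
  have hT'' (x : ℝ) (hx : x ∈ Set.Ioo (0 : ℝ) 1) : 0 ≤ (derivative (derivative T)).eval x := by
    rw [derivative_derivative_strataSurvival, eval_smul, smul_eq_mul]
    exact mul_nonneg (by positivity) (bernsteinPolynomial_eval_nonneg k hx.1.le hx.2.le)
  simp_rw [hF, sub_sub_cancel]
  constructor
  · refine concaveOn_log_of_hasDerivAt (convex_Ioo 0 1) isOpen_Ioo
      (fun x _ => (T.hasDerivAt x).const_sub 1) (fun x _ => (T.derivative.hasDerivAt x).neg)
      (fun x hx => sub_pos.2 (hT1 x hx)) fun x hx => ?_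
    nlinarith [hT1 x hx, hT'' x hx, sq_nonneg ((derivative T).eval x)]
  · exact concaveOn_log_of_hasDerivAt (convex_Ioo 0 1) isOpen_Ioo
      (fun x _ => T.hasDerivAt x) (fun x _ => T.derivative.hasDerivAt x) hT0
      fun x hx => derivative_derivative_strataSurvival_eval_mul_le (by omega) hx.1.le hx.2.le

/-- **Log-concavity of the MinPNS stratum CDF and its complement.** For `1 ≤ r ≤ m`,
both `x ↦ log 𝔹_(r)(x)` and `x ↦ log (1 - 𝔹_(r)(x))` are concave on `(0,1)`. -/
theorem strataCDF_log_concave (m : ℕ) (hm : 1 ≤ m) (r : ℕ) (hr : 1 ≤ r) (hrm : r ≤ m) :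
    ConcaveOn ℝ (Set.Ioo 0 1) (fun x => Real.log (strataCDF m r x)) ∧
    ConcaveOn ℝ (Set.Ioo 0 1) (fun x => Real.log (1 - strataCDF m r x)) :=
  strataCDF_log_concave_general m r hr hrm
end

section
/- Fix m ≥ 1, nonnegative integers n_1, …, n_m not all zero, and integers y_1, …, y_m with 0 ≤ y_r ≤ n_r. Then the log-likelihood function ℒ(θ) = ∑_{r=1}^m [ y_r·log(𝔹_(r)(θ)) + (n_r − y_r)·log(1 − 𝔹_(r)(θ)) ] is a concave function of θ on the open interval (0,1). Consequently, ℒ attains a maximum on [0,1] (with the convention ℒ extended by its limits at the endpoints), so the maximum likelihood estimator F_ml(t) = argmax_{θ∈[0,1]} ℒ(θ) exists. -/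
open Finset

/-- Extended-real logarithm: `log x` for `x > 0` and `⊥` (i.e. `-∞`, the limiting value)
for `x ≤ 0`.  Used to extend the log-likelihood to the endpoints of `[0,1]` by its limits. -/
noncomputable def elog (x : ℝ) : EReal := if x ≤ 0 then ⊥ else ((Real.log x : ℝ) : EReal)

/-- The MinPNS log-likelihood of `θ` (extended-real-valued, so that it is defined on all of
`[0,1]` with the endpoint values taken as limits; note `(0 : EReal) * ⊥ = 0`). -/
noncomputable def extLogLik (m : ℕ) (nn y : ℕ → ℕ) (θ : ℝ) : EReal :=
  ∑ r ∈ Finset.Icc 1 m,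
    (((y r : ℝ) : EReal) * elog (strataCDF m r θ)
      + (((nn r - y r : ℕ) : ℝ) : EReal) * elog (1 - strataCDF m r θ))

/-!
Write `φ(θ) = P(Bin(m-1, θ) < r)` and let `ψ` be the Beta(r, m-r) density. Telescoping the
binomial tails gives `𝔹_(r)' = (m/r) φ` and `φ' = -ψ`, so `𝔹_(r)` increases from `0` to `1`
and is concave on `[0,1]`; hence `log 𝔹_(r)` is concave. For `log (1 - 𝔹_(r))` the
second-derivative criterion `f'' f ≤ f'^2` reads `ψ(θ) (1 - 𝔹_(r)(θ)) ≤ (m/r) φ(θ)^2`. Since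
`1 - 𝔹_(r)(θ) = (m/r) ∫_θ^1 φ`, this follows from the monotone likelihood ratio
`ψ(θ) φ(t) ≤ ψ(t) φ(θ)` for `θ ≤ t` together with `∫_θ^1 ψ = φ(θ) - φ(1) ≤ φ(θ)`.
On `[0,1]` the extended log-likelihood is the (monotone) extended logarithm of the continuous
likelihood, which attains its maximum on the compact interval.
-/

lemma elog_mono : Monotone elog := by
  intro a b hab
  unfold elog
  split_ifs with ha hb hb
  · exact le_rfl
  · exact bot_le
  · exact absurd (hab.trans hb) ha
  · exact EReal.coe_le_coe_iff.2 (Real.log_le_log (not_le.1 ha) hab)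

lemma elog_mul {a b : ℝ} (ha : 0 ≤ a) (hb : 0 ≤ b) : elog (a * b) = elog a + elog b := by
  rcases ha.eq_or_lt with rfl | ha
  · simp [elog]
  rcases hb.eq_or_lt with rfl | hb
  · simp [elog]
  simp only [elog, not_le.2 (mul_pos ha hb), not_le.2 ha, not_le.2 hb, if_false,
    Real.log_mul ha.ne' hb.ne', EReal.coe_add]

lemma elog_pow (n : ℕ) {w : ℝ} (hw : 0 ≤ w) : elog (w ^ n) = ((n : ℝ) : EReal) * elog w := by
  rcases Nat.eq_zero_or_pos n with rfl | hn
  · simp [elog]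
  rcases hw.eq_or_lt with rfl | hw
  · simp only [elog, zero_pow hn.ne', le_refl, if_true]
    exact (EReal.mul_bot_of_pos (by exact_mod_cast hn)).symm
  simp only [elog, not_le.2 (pow_pos hw n), not_le.2 hw, if_false, Real.log_pow, EReal.coe_mul]

lemma elog_prod {ι : Type*} (s : Finset ι) {f : ι → ℝ} (hf : ∀ i ∈ s, 0 ≤ f i) :
    elog (∏ i ∈ s, f i) = ∑ i ∈ s, elog (f i) := by
  induction s using Finset.cons_induction with
  | empty => simp [elog]
  | cons a s ha ih =>
    rw [prod_cons, sum_cons, elog_mul (hf a (mem_cons_self a s))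
      (prod_nonneg fun i hi => hf i (mem_cons_of_mem hi)),
      ih fun i hi => hf i (mem_cons_of_mem hi)]

lemma concaveOn_log_comp {D : Set ℝ} (hD : Convex ℝ D) (hDo : IsOpen D) {f f' f'' : ℝ → ℝ}
    (hf : ∀ x ∈ D, HasDerivAt f (f' x) x) (hf' : ∀ x ∈ D, HasDerivAt f' (f'' x) x)
    (hpos : ∀ x ∈ D, 0 < f x) (hle : ∀ x ∈ D, f'' x * f x ≤ f' x ^ 2) :
    ConcaveOn ℝ D fun x => Real.log (f x) := by
  refine concaveOn_of_hasDerivWithinAt2_nonpos hD (f' := fun x => f' x / f x)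
    (f'' := fun x => (f'' x * f x - f' x * f' x) / f x ^ 2)
    (fun x hx => ((hf x hx).continuousAt.log (hpos x hx).ne').continuousWithinAt) ?_ ?_ ?_ <;>
    rw [hDo.interior_eq] <;> intro x hx
  · exact ((hf x hx).log (hpos x hx).ne').hasDerivWithinAt
  · exact ((hf' x hx).div (hf x hx) (hpos x hx).ne').hasDerivWithinAt
  · exact div_nonpos_of_nonpos_of_nonneg (by nlinarith [hle x hx]) (sq_nonneg _)

lemma ConcaveOn.sum {𝕜 E β ι : Type*} [Semiring 𝕜] [PartialOrder 𝕜] [AddCommMonoid E]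
    [AddCommMonoid β] [PartialOrder β] [IsOrderedAddMonoid β] [SMul 𝕜 E] [Module 𝕜 β]
    {s : Set E} (hs : Convex 𝕜 s) {t : Finset ι} {f : ι → E → β}
    (hf : ∀ i ∈ t, ConcaveOn 𝕜 s (f i)) : ConcaveOn 𝕜 s fun x => ∑ i ∈ t, f i x := by
  induction t using Finset.cons_induction with
  | empty => simpa using concaveOn_const 0 hs
  | cons a t ha ih =>
    simp only [sum_cons]
    exact (hf a (mem_cons_self a t)).add (ih fun i hi => hf i (mem_cons_of_mem hi))

namespace MinPNS

section Binomial

def binomPMF (n k : ℕ) (x : ℝ) : ℝ :=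
  n.choose k * x ^ k * (1 - x) ^ (n - k)

def betaDensity (m i : ℕ) (u : ℝ) : ℝ :=
  i * m.choose i * u ^ (i - 1) * (1 - u) ^ (m - i)

variable {x : ℝ}

lemma binomPMF_nonneg (n k : ℕ) (hx0 : 0 ≤ x) (hx1 : x ≤ 1) : 0 ≤ binomPMF n k x := by
  have : 0 ≤ 1 - x := by linarith
  unfold binomPMF; positivity

lemma betaDensity_nonneg (m i : ℕ) (hx0 : 0 ≤ x) (hx1 : x ≤ 1) : 0 ≤ betaDensity m i x := by
  have : 0 ≤ 1 - x := by linarith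
  unfold betaDensity; positivity

lemma continuous_betaDensity (m i : ℕ) : Continuous (betaDensity m i) := by
  unfold betaDensity; fun_prop

lemma betaDensity_of_lt {m i : ℕ} (h : m < i) (x : ℝ) : betaDensity m i x = 0 := by
  simp [betaDensity, Nat.choose_eq_zero_of_lt h]

lemma betaDensity_succ (m k : ℕ) (x : ℝ) :
    betaDensity m (k + 1) x = m * binomPMF (m - 1) k x := by
  have hc : ((k + 1 : ℕ) : ℝ) * m.choose (k + 1) = m * (m - 1).choose k := by
    rcases m with _ | m
    · simp
    · rw [Nat.add_sub_cancel, mul_comm]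
      exact_mod_cast (Nat.add_one_mul_choose_eq m k).symm
  simp only [betaDensity, binomPMF, Nat.add_sub_cancel, Nat.sub_sub, add_comm 1 k]
  rw [hc]; ring

lemma hasDerivAt_binomPMF (n k : ℕ) (x : ℝ) :
    HasDerivAt (binomPMF n k) (betaDensity n k x - betaDensity n (k + 1) x) x := by
  have hpow : HasDerivAt (fun x : ℝ => (1 - x) ^ (n - k))
      (-((n - k : ℕ) * (1 - x) ^ (n - k - 1))) x := by
    simpa using ((hasDerivAt_id' x).const_sub 1).fun_pow (n - k)
  have hc : ((k + 1 : ℕ) : ℝ) * n.choose (k + 1) = n.choose k * (n - k : ℕ) := by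
    rw [mul_comm]; exact_mod_cast Nat.choose_succ_right_eq n k
  refine (((hasDerivAt_pow k x).const_mul (n.choose k : ℝ)).mul hpow).congr_deriv ?_
  simp only [betaDensity, Nat.add_sub_cancel, Nat.sub_add_eq]
  rw [hc]; ring

end Binomial

def upperTail (m i : ℕ) (x : ℝ) : ℝ :=
  ∑ j ∈ Icc i m, binomPMF m j x

def lowerTail (n r : ℕ) (x : ℝ) : ℝ :=
  ∑ j ∈ range r, binomPMF n j x

lemma hasDerivAt_upperTail {m i : ℕ} (him : i ≤ m) (x : ℝ) :
    HasDerivAt (upperTail m i) (betaDensity m i x) x := by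
  have h := HasDerivAt.fun_sum (u := Icc i m) fun j _ => hasDerivAt_binomPMF m j x
  have htel : ∑ j ∈ Icc i m, (betaDensity m j x - betaDensity m (j + 1) x)
      = betaDensity m i x - betaDensity m (m + 1) x := by
    rw [← neg_sub, ← sum_Icc_sub him fun j => betaDensity m j x, ← sum_neg_distrib]
    simp only [neg_sub]
  rwa [htel, betaDensity_of_lt (Nat.lt_succ_self m), sub_zero] at h

lemma upperTail_zero {m i : ℕ} (hi : 1 ≤ i) : upperTail m i 0 = 0 :=
  sum_eq_zero fun j hj => by
    simp [binomPMF, zero_pow (by grind : j ≠ 0)]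

lemma upperTail_one {m i : ℕ} (him : i ≤ m) : upperTail m i 1 = 1 := by
  rw [upperTail, sum_eq_single_of_mem m (mem_Icc.2 ⟨him, le_rfl⟩)]
  · simp [binomPMF]
  · intro j hj hjm
    have : j < m := lt_of_le_of_ne (mem_Icc.1 hj).2 hjm
    simp [binomPMF, zero_pow (Nat.sub_ne_zero_of_lt this)]

lemma betaCDF_eq_upperTail {m i : ℕ} (hi : 1 ≤ i) (him : i ≤ m) (x : ℝ) :
    betaCDF m i x = upperTail m i x := by
  change ∫ u in (0 : ℝ)..x, betaDensity m i u = _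
  rw [intervalIntegral.integral_eq_sub_of_hasDerivAt
    (fun y _ => hasDerivAt_upperTail him y) ((continuous_betaDensity m i).intervalIntegrable _ _),
    upperTail_zero hi, sub_zero]

lemma hasDerivAt_lowerTail (n r : ℕ) (x : ℝ) :
    HasDerivAt (lowerTail n r) (-betaDensity n r x) x := by
  have h := HasDerivAt.fun_sum (u := range r) fun j _ => hasDerivAt_binomPMF n j x
  rwa [sum_range_sub', betaDensity, Nat.cast_zero, zero_mul, zero_mul, zero_mul, zero_sub] at h

lemma continuous_lowerTail (n r : ℕ) : Continuous (lowerTail n r) :=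
  continuous_iff_continuousAt.2 fun x => (hasDerivAt_lowerTail n r x).continuousAt

lemma lowerTail_nonneg (n r : ℕ) {x : ℝ} (hx0 : 0 ≤ x) (hx1 : x ≤ 1) : 0 ≤ lowerTail n r x :=
  sum_nonneg fun j _ => binomPMF_nonneg n j hx0 hx1

lemma lowerTail_pos (n : ℕ) {r : ℕ} (hr : 1 ≤ r) {x : ℝ} (hx0 : 0 ≤ x) (hx1 : x < 1) :
    0 < lowerTail n r x := by
  have h0 : 0 < binomPMF n 0 x := by
    have : 0 < 1 - x := by linarith
    simp only [binomPMF, Nat.choose_zero_right, Nat.cast_one, pow_zero, one_mul, Nat.sub_zero]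
    positivity
  exact h0.trans_le <| single_le_sum (fun j _ => binomPMF_nonneg n j hx0 hx1.le)
    (mem_range.2 hr)

section StrataCDF

variable {m r : ℕ}

lemma strataCDF_eq_sum_upperTail (hrm : r ≤ m) (x : ℝ) :
    strataCDF m r x = (1 / r : ℝ) * ∑ i ∈ Icc 1 r, upperTail m i x := by
  rw [strataCDF]
  congr 1
  exact sum_congr rfl fun i hi => betaCDF_eq_upperTail (mem_Icc.1 hi).1 ((mem_Icc.1 hi).2.trans hrm) x

lemma sum_betaDensity_eq_mul_lowerTail (m r : ℕ) (x : ℝ) :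
    ∑ i ∈ Icc 1 r, betaDensity m i x = m * lowerTail (m - 1) r x := by
  have hshift : ∑ i ∈ Icc 1 r, betaDensity m i x = ∑ k ∈ range r, betaDensity m (k + 1) x := by
    rw [range_eq_Ico, sum_Ico_add' (fun i => betaDensity m i x), zero_add, Ico_add_one_right_eq_Icc]
  rw [hshift, lowerTail, mul_sum]
  exact sum_congr rfl fun k _ => betaDensity_succ m k x

lemma hasDerivAt_strataCDF (hrm : r ≤ m) (x : ℝ) :
    HasDerivAt (strataCDF m r) (m / r * lowerTail (m - 1) r x) x := by
  have h := (HasDerivAt.fun_sum (u := Icc 1 r) fun i hi =>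
    hasDerivAt_upperTail ((mem_Icc.1 hi).2.trans hrm) x).const_mul (1 / r : ℝ)
  rw [sum_betaDensity_eq_mul_lowerTail] at h
  rw [funext (strataCDF_eq_sum_upperTail hrm)]
  exact h.congr_deriv (by ring)

lemma continuous_strataCDF (hrm : r ≤ m) : Continuous (strataCDF m r) :=
  continuous_iff_continuousAt.2 fun x => (hasDerivAt_strataCDF hrm x).continuousAt

lemma strataCDF_zero (m r : ℕ) : strataCDF m r 0 = 0 := by
  simp [strataCDF, betaCDF]

lemma strataCDF_one (hr : 1 ≤ r) (hrm : r ≤ m) : strataCDF m r 1 = 1 := by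
  rw [strataCDF_eq_sum_upperTail hrm,
    sum_congr rfl fun i hi => upperTail_one ((mem_Icc.1 hi).2.trans hrm)]
  simp only [sum_const, Nat.card_Icc, Nat.add_sub_cancel, nsmul_eq_mul, mul_one]
  have : (r : ℝ) ≠ 0 := by exact_mod_cast (by omega : r ≠ 0)
  field_simp

lemma strictMonoOn_strataCDF (hr : 1 ≤ r) (hrm : r ≤ m) :
    StrictMonoOn (strataCDF m r) (Set.Icc 0 1) := by
  refine strictMonoOn_of_deriv_pos (convex_Icc 0 1) (continuous_strataCDF hrm).continuousOn
    fun x hx => ?_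
  rw [interior_Icc] at hx
  rw [(hasDerivAt_strataCDF hrm x).deriv]
  have := lowerTail_pos (m - 1) hr hx.1.le hx.2
  have : (0 : ℝ) < m / r := div_pos (by exact_mod_cast (by omega : 0 < m)) (by exact_mod_cast hr)
  positivity

lemma strataCDF_mem_Icc (hr : 1 ≤ r) (hrm : r ≤ m) {x : ℝ} (hx : x ∈ Set.Icc (0 : ℝ) 1) :
    strataCDF m r x ∈ Set.Icc (0 : ℝ) 1 := by
  have hmono := (strictMonoOn_strataCDF hr hrm).monotoneOn
  rw [← strataCDF_zero m r, ← strataCDF_one hr hrm]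
  exact ⟨hmono (Set.left_mem_Icc.2 zero_le_one) hx hx.1,
    hmono hx (Set.right_mem_Icc.2 zero_le_one) hx.2⟩

lemma strataCDF_mem_Ioo (hr : 1 ≤ r) (hrm : r ≤ m) {x : ℝ} (hx : x ∈ Set.Ioo (0 : ℝ) 1) :
    strataCDF m r x ∈ Set.Ioo (0 : ℝ) 1 := by
  have hsm := strictMonoOn_strataCDF hr hrm
  rw [← strataCDF_zero m r, ← strataCDF_one hr hrm]
  exact ⟨hsm (Set.left_mem_Icc.2 zero_le_one) (Set.Ioo_subset_Icc_self hx) hx.1,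
    hsm (Set.Ioo_subset_Icc_self hx) (Set.right_mem_Icc.2 zero_le_one) hx.2⟩

end StrataCDF

lemma betaDensity_mul_binomPMF_le {n r j : ℕ} (hjr : j < r) {θ t : ℝ} (hθ : 0 ≤ θ) (hθt : θ ≤ t)
    (ht : t ≤ 1) : betaDensity n r θ * binomPMF n j t ≤ betaDensity n r t * binomPMF n j θ := by
  rcases lt_or_ge n r with hnr | hrn
  · simp [betaDensity_of_lt hnr]
  obtain ⟨d, hd⟩ : ∃ d, r - 1 = j + d := ⟨r - 1 - j, by omega⟩
  have hnj : n - j = (n - r) + (d + 1) := by omega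
  have h1θ : 0 ≤ 1 - θ := by linarith
  have h1t : 0 ≤ 1 - t := by linarith
  have ht0 : 0 ≤ t := hθ.trans hθt
  have core : θ ^ d * (1 - t) ^ (d + 1) ≤ t ^ d * (1 - θ) ^ (d + 1) :=
    mul_le_mul (pow_le_pow_left₀ hθ hθt d) (pow_le_pow_left₀ h1t (by linarith) _) (by positivity)
      (by positivity)
  set c : ℝ := r * n.choose r * n.choose j * θ ^ j * t ^ j * (1 - θ) ^ (n - r) * (1 - t) ^ (n - r)
    with hc_def
  have hc : 0 ≤ c := by rw [hc_def]; positivity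
  calc betaDensity n r θ * binomPMF n j t = c * (θ ^ d * (1 - t) ^ (d + 1)) := by
        simp only [betaDensity, binomPMF, hd, hnj, c]; ring
    _ ≤ c * (t ^ d * (1 - θ) ^ (d + 1)) := mul_le_mul_of_nonneg_left core hc
    _ = betaDensity n r t * binomPMF n j θ := by
        simp only [betaDensity, binomPMF, hd, hnj, c]; ring

lemma betaDensity_mul_lowerTail_le (n r : ℕ) {θ t : ℝ} (hθ : 0 ≤ θ) (hθt : θ ≤ t) (ht : t ≤ 1) :
    betaDensity n r θ * lowerTail n r t ≤ betaDensity n r t * lowerTail n r θ := by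
  simp only [lowerTail, mul_sum]
  exact sum_le_sum fun j hj => betaDensity_mul_binomPMF_le (mem_range.1 hj) hθ hθt ht

lemma betaDensity_mul_one_sub_strataCDF_le {m r : ℕ} (hr : 1 ≤ r) (hrm : r ≤ m) {θ : ℝ}
    (hθ0 : 0 ≤ θ) (hθ1 : θ ≤ 1) :
    betaDensity (m - 1) r θ * (1 - strataCDF m r θ) ≤ m / r * lowerTail (m - 1) r θ ^ 2 := by
  set φ := lowerTail (m - 1) r
  set ψ := betaDensity (m - 1) r
  have hS : 1 - strataCDF m r θ = m / r * ∫ t in θ..1, φ t := by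
    rw [← intervalIntegral.integral_const_mul, intervalIntegral.integral_eq_sub_of_hasDerivAt
      (fun t _ => hasDerivAt_strataCDF hrm t)
      ((continuous_const.mul (continuous_lowerTail _ _)).intervalIntegrable _ _),
      strataCDF_one hr hrm]
  have hψ : ∫ t in θ..1, ψ t = φ θ - φ 1 := by
    rw [← neg_sub, ← intervalIntegral.integral_eq_sub_of_hasDerivAt
      (fun t _ => hasDerivAt_lowerTail (m - 1) r t)
      ((continuous_betaDensity _ _).neg.intervalIntegrable _ _), intervalIntegral.integral_neg,
      neg_neg]
  have hmono : ψ θ * ∫ t in θ..1, φ t ≤ φ θ * ∫ t in θ..1, ψ t := by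
    rw [← intervalIntegral.integral_const_mul, ← intervalIntegral.integral_const_mul]
    refine intervalIntegral.integral_mono_on hθ1
      ((continuous_const.mul (continuous_lowerTail _ _)).intervalIntegrable _ _)
      ((continuous_const.mul (continuous_betaDensity _ _)).intervalIntegrable _ _) fun t ht => ?_
    linarith [betaDensity_mul_lowerTail_le (m - 1) r hθ0 ht.1 ht.2]
  have hφθ := lowerTail_nonneg (m - 1) r hθ0 hθ1
  have hφ1 := lowerTail_nonneg (m - 1) r zero_le_one le_rfl
  have hmr : (0 : ℝ) ≤ m / r := by positivity
  calc ψ θ * (1 - strataCDF m r θ) = m / r * (ψ θ * ∫ t in θ..1, φ t) := by rw [hS]; ring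
    _ ≤ m / r * (φ θ * (φ θ - φ 1)) := by rw [← hψ]; exact mul_le_mul_of_nonneg_left hmono hmr
    _ ≤ m / r * φ θ ^ 2 := mul_le_mul_of_nonneg_left (by nlinarith) hmr

section Concavity

variable {m r : ℕ}

lemma concaveOn_log_strataCDF (hr : 1 ≤ r) (hrm : r ≤ m) :
    ConcaveOn ℝ (Set.Ioo 0 1) fun θ => Real.log (strataCDF m r θ) := by
  refine concaveOn_log_comp (convex_Ioo 0 1) isOpen_Ioo (fun x _ => hasDerivAt_strataCDF hrm x)
    (fun x _ => (hasDerivAt_lowerTail (m - 1) r x).const_mul (m / r : ℝ))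
    (fun x hx => (strataCDF_mem_Ioo hr hrm hx).1) fun x hx => ?_
  have hnonneg : 0 ≤ m / r * betaDensity (m - 1) r x * strataCDF m r x :=
    mul_nonneg (mul_nonneg (by positivity) (betaDensity_nonneg _ _ hx.1.le hx.2.le))
      (strataCDF_mem_Ioo hr hrm hx).1.le
  rw [mul_neg, neg_mul]
  exact (neg_nonpos.2 hnonneg).trans (sq_nonneg _)

lemma concaveOn_log_one_sub_strataCDF (hr : 1 ≤ r) (hrm : r ≤ m) :
    ConcaveOn ℝ (Set.Ioo 0 1) fun θ => Real.log (1 - strataCDF m r θ) := by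
  refine concaveOn_log_comp (convex_Ioo 0 1) isOpen_Ioo
    (fun x _ => (hasDerivAt_strataCDF hrm x).const_sub 1)
    (fun x _ => ((hasDerivAt_lowerTail (m - 1) r x).const_mul (m / r : ℝ)).neg)
    (fun x hx => sub_pos.2 (strataCDF_mem_Ioo hr hrm hx).2) fun x hx => ?_
  have hmr : (0 : ℝ) ≤ m / r := by positivity
  calc -(m / r * -betaDensity (m - 1) r x) * (1 - strataCDF m r x)
      = m / r * (betaDensity (m - 1) r x * (1 - strataCDF m r x)) := by ring
    _ ≤ m / r * (m / r * lowerTail (m - 1) r x ^ 2) := mul_le_mul_of_nonneg_left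
        (betaDensity_mul_one_sub_strataCDF_le hr hrm hx.1.le hx.2.le) hmr
    _ = (-(m / r * lowerTail (m - 1) r x)) ^ 2 := by ring


end Concavity

section Likelihood

noncomputable def likelihood (m : ℕ) (nn y : ℕ → ℕ) (θ : ℝ) : ℝ :=
  ∏ r ∈ Icc 1 m, strataCDF m r θ ^ y r * (1 - strataCDF m r θ) ^ (nn r - y r)

lemma continuous_likelihood (m : ℕ) (nn y : ℕ → ℕ) : Continuous (likelihood m nn y) :=
  continuous_finsetProd _ fun _ hr =>
    have hS := continuous_strataCDF (mem_Icc.1 hr).2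
    (hS.pow _).mul ((continuous_const.sub hS).pow _)

variable {m : ℕ} {nn y : ℕ → ℕ}

lemma extLogLik_eq_elog_likelihood {θ : ℝ} (hθ : θ ∈ Set.Icc (0 : ℝ) 1) :
    extLogLik m nn y θ = elog (likelihood m nn y θ) := by
  have hS r (hr : r ∈ Icc 1 m) := strataCDF_mem_Icc (mem_Icc.1 hr).1 (mem_Icc.1 hr).2 hθ
  rw [likelihood, elog_prod _ fun r hr => by
    have := (hS r hr).1; have := sub_nonneg.2 (hS r hr).2; positivity]
  refine sum_congr rfl fun r hr => ?_
  rw [elog_mul (pow_nonneg (hS r hr).1 _) (pow_nonneg (sub_nonneg.2 (hS r hr).2) _),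
    elog_pow _ (hS r hr).1, elog_pow _ (sub_nonneg.2 (hS r hr).2)]

end Likelihood

end MinPNS

open MinPNS in
theorem logLik_concave_and_mle_exists_general
    (m : ℕ) (nn y : ℕ → ℕ)
    (hy : ∀ r ∈ Finset.Icc 1 m, y r ≤ nn r) :
    ConcaveOn ℝ (Set.Ioo 0 1)
      (fun θ => ∑ r ∈ Finset.Icc 1 m,
        ((y r : ℝ) * Real.log (strataCDF m r θ)
          + ((nn r : ℝ) - (y r : ℝ)) * Real.log (1 - strataCDF m r θ))) ∧
    ∃ θ₀ ∈ Set.Icc (0:ℝ) 1, ∀ θ ∈ Set.Icc (0:ℝ) 1,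
      extLogLik m nn y θ ≤ extLogLik m nn y θ₀ := by
  refine ⟨ConcaveOn.sum (convex_Ioo 0 1) fun r hr => ?_, ?_⟩
  · obtain ⟨hr1, hrm⟩ := mem_Icc.1 hr
    have hyn : (0 : ℝ) ≤ nn r - y r := sub_nonneg.2 (by exact_mod_cast hy r hr)
    exact ((concaveOn_log_strataCDF hr1 hrm).smul (Nat.cast_nonneg (y r))).add
      ((concaveOn_log_one_sub_strataCDF hr1 hrm).smul hyn)
  · obtain ⟨θ₀, hθ₀, hmax⟩ := isCompact_Icc.exists_isMaxOn (Set.nonempty_Icc.2 zero_le_one)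
      (continuous_likelihood m nn y).continuousOn
    refine ⟨θ₀, hθ₀, fun θ hθ => ?_⟩
    rw [extLogLik_eq_elog_likelihood hθ, extLogLik_eq_elog_likelihood hθ₀]
    exact elog_mono (hmax hθ)

/-- **Concavity of the MinPNS log-likelihood and existence of the MLE.** For counts
`0 ≤ y_r ≤ n_r` (not all `n_r` zero), the log-likelihood
`ℒ(θ) = ∑_r [y_r log 𝔹_(r)(θ) + (n_r - y_r) log (1 - 𝔹_(r)(θ))]` is concave on `(0,1)`;
consequently (extending `ℒ` to `[0,1]` by its limits at the endpoints) `ℒ` attains a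
maximum on `[0,1]`, i.e. the maximum likelihood estimator exists. -/
theorem logLik_concave_and_mle_exists
    (m : ℕ) (hm : 1 ≤ m) (nn y : ℕ → ℕ)
    (hnn : ∃ r ∈ Finset.Icc 1 m, nn r ≠ 0)
    (hy : ∀ r ∈ Finset.Icc 1 m, y r ≤ nn r) :
    ConcaveOn ℝ (Set.Ioo 0 1)
      (fun θ => ∑ r ∈ Finset.Icc 1 m,
        ((y r : ℝ) * Real.log (strataCDF m r θ)
          + ((nn r : ℝ) - (y r : ℝ)) * Real.log (1 - strataCDF m r θ))) ∧
    ∃ θ₀ ∈ Set.Icc (0:ℝ) 1, ∀ θ ∈ Set.Icc (0:ℝ) 1,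
      extLogLik m nn y θ ≤ extLogLik m nn y θ₀ :=
  logLik_concave_and_mle_exists_general m nn y hy
end

section
/- Under the perfect-ranking MinPNS model with set size m and stratum proportions λ_1, …, λ_m ∈ (0,1) summing to 1, fix t with F(t) ∈ (0,1), and define σ_mb²(t) = ( ∑_{r=1}^m λ_r·𝔹_(r)(F(t))·(1 − 𝔹_(r)(F(t))) ) / ( ∑_{r=1}^m λ_r·β_(r)(F(t)) )² and σ_ml²(t) = ( ∑_{r=1}^m λ_r·β_(r)(F(t))² / ( 𝔹_(r)(F(t))·(1 − 𝔹_(r)(F(t))) ) )⁻¹. Then σ_ml²(t) ≤ σ_mb²(t), and equality holds if and only if either m = 1 or there exists r ∈ {1, …, m} such that λ_r = 1. -/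
open Finset

/-- The Beta(i, m+1-i) probability density function evaluated at `x`. -/
noncomputable def betaPDF (m i : ℕ) (x : ℝ) : ℝ :=
  (i : ℝ) * (m.choose i : ℝ) * x ^ (i - 1) * (1 - x) ^ (m - i)

/-- `β_(r)(x) = (1/r) ∑_{i=1}^r i C(m,i) x^{i-1} (1-x)^{m-i}`, the derivative of `𝔹_(r)`. -/
noncomputable def strataPDF (m r : ℕ) (x : ℝ) : ℝ :=
  (1 / r : ℝ) * ∑ i ∈ Finset.Icc 1 r, betaPDF m i x

/-- The asymptotic variance of the moment-based estimator of `F(t)` in perfect-ranking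
MinPNS: `σ_mb²(t) = (∑_r λ_r 𝔹_(r)(F t)(1-𝔹_(r)(F t))) / (∑_r λ_r β_(r)(F t))²`. -/
noncomputable def sigmaMBsq (m : ℕ) (lam : ℕ → ℝ) (x : ℝ) : ℝ :=
  (∑ r ∈ Finset.Icc 1 m, lam r * strataCDF m r x * (1 - strataCDF m r x))
    / (∑ r ∈ Finset.Icc 1 m, lam r * strataPDF m r x) ^ 2

/-- The asymptotic variance of the maximum likelihood estimator of `F(t)` in
perfect-ranking MinPNS: `σ_ml²(t) = (∑_r λ_r β_(r)(F t)² / (𝔹_(r)(F t)(1-𝔹_(r)(F t))))⁻¹`. -/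
noncomputable def sigmaMLsq (m : ℕ) (lam : ℕ → ℝ) (x : ℝ) : ℝ :=
  (∑ r ∈ Finset.Icc 1 m,
    lam r * (strataPDF m r x) ^ 2 / (strataCDF m r x * (1 - strataCDF m r x)))⁻¹

/-!
Write `b r = β_(r)(x)` and `V r = 𝔹_(r)(x) (1 - 𝔹_(r)(x))`. Then `σ_mb² ≥ σ_ml²` is the
Cauchy–Schwarz (Sedrakyan) inequality `(∑ λ b)² / ∑ λ V ≤ ∑ (λ b)² / (λ V)`, which is strict as
soon as `b r / V r` is not constant in `r`. It is not: `𝔹_(1)(x) = 1 - (1 - x)^m`,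
`β_(1)(x) = m (1 - x)^(m-1)`, `𝔹_(m)(x) = x`, `β_(m)(x) = 1`, and equal ratios at `r = 1` and
`r = m` would force `m x = 1 - (1 - x)^m`, against the strict Bernoulli inequality for `m ≥ 2`.
Proportions in `(0, 1)` summing to `1` need `m ≥ 2`, so the inequality is always strict and both
sides of the equality criterion are false.
-/

open Polynomial

namespace bernsteinPolynomial

theorem derivative_sum_Ico_succ (R : Type*) [CommRing R] {n k : ℕ} (hk : k ≤ n + 1) :
    derivative (∑ j ∈ Ico k (n + 1), bernsteinPolynomial R (n + 1) (j + 1)) =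
      (n + 1) * bernsteinPolynomial R n k := by
  have htel := sum_Ico_sub (fun j => bernsteinPolynomial R n j) hk
  rw [eq_zero_of_lt R n.lt_succ_self] at htel
  simp only [derivative_sum, derivative_succ_aux, ← mul_sum, sum_sub_distrib] at htel ⊢
  linear_combination (-(n + 1 : R[X])) * htel

lemma eval_nonneg (n ν : ℕ) {x : ℝ} (hx₀ : 0 ≤ x) (hx₁ : x ≤ 1) :
    0 ≤ (bernsteinPolynomial ℝ n ν).eval x := by
  have : 0 ≤ 1 - x := by linarith
  simp only [bernsteinPolynomial, eval_mul, eval_natCast, eval_pow, eval_X, eval_sub, eval_one]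
  positivity

lemma sum_range_eval_succ (n : ℕ) (x : ℝ) :
    ∑ j ∈ range (n + 1), (bernsteinPolynomial ℝ (n + 1) (j + 1)).eval x =
      1 - (1 - x) ^ (n + 1) := by
  have h := congrArg (eval x) (bernsteinPolynomial.sum ℝ (n + 1))
  rw [eval_finsetSum, sum_range_succ'] at h
  simp only [bernsteinPolynomial, eval_mul, eval_natCast, eval_pow, eval_X, eval_sub, eval_one,
    Nat.choose_zero_right, Nat.sub_zero] at h ⊢
  linear_combination h

end bernsteinPolynomial

lemma sum_Icc_one_eq_sum_range {M : Type*} [AddCommMonoid M] (n : ℕ) (f : ℕ → M) :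
    ∑ i ∈ Icc 1 (n + 1), f i = ∑ k ∈ range (n + 1), f (k + 1) := by
  rw [range_eq_Ico, sum_Ico_add' f 0 (n + 1) 1, ← Ico_add_one_right_eq_Icc]

lemma betaPDF_succ_succ (n k : ℕ) (x : ℝ) :
    betaPDF (n + 1) (k + 1) x = (n + 1) * (bernsteinPolynomial ℝ n k).eval x := by
  have h : ((n + 1 : ℕ) * n.choose k : ℝ) = (n + 1).choose (k + 1) * (k + 1 : ℕ) := by
    exact_mod_cast Nat.add_one_mul_choose_eq n k
  simp only [betaPDF, bernsteinPolynomial, eval_mul, eval_natCast, eval_pow, eval_X, eval_sub,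
    eval_one, Nat.add_sub_cancel, Nat.add_sub_add_right]
  push_cast at h ⊢
  linear_combination (-(x ^ k * (1 - x) ^ (n - k))) * h

lemma betaCDF_eq_integral (m i : ℕ) (x : ℝ) :
    betaCDF m i x = ∫ u in (0 : ℝ)..x, betaPDF m i u := rfl

/-- `𝔹(x, k+1, n+1-k)` is the binomial tail `P(Bin(n+1, x) ≥ k+1)`: the derivatives of the
Bernstein polynomials in the tail telescope to the Beta density. -/
lemma betaCDF_succ_succ {n k : ℕ} (hk : k ≤ n) (x : ℝ) :
    betaCDF (n + 1) (k + 1) x =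
      ∑ j ∈ Ico k (n + 1), (bernsteinPolynomial ℝ (n + 1) (j + 1)).eval x := by
  set P := ∑ j ∈ Ico k (n + 1), bernsteinPolynomial ℝ (n + 1) (j + 1)
  have hP : ∀ u, betaPDF (n + 1) (k + 1) u = (derivative P).eval u := fun u => by
    rw [bernsteinPolynomial.derivative_sum_Ico_succ ℝ (by omega), betaPDF_succ_succ]
    simp
  have hP₀ : P.eval 0 = 0 := by
    simp [P, eval_finsetSum, bernsteinPolynomial.eval_at_0]
  rw [← eval_finsetSum, betaCDF_eq_integral, funext hP,
    intervalIntegral.integral_eq_sub_of_hasDerivAt (fun u _ => P.hasDerivAt u)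
      (P.derivative.continuous.intervalIntegrable _ _), hP₀, sub_zero]

section Strata

open scoped BigOperators

lemma one_div_mul_sum_Icc_eq_expect (r : ℕ) (f : ℕ → ℝ) :
    (1 / r : ℝ) * ∑ i ∈ Icc 1 r, f i = 𝔼 i ∈ Icc 1 r, f i := by
  rw [expect_eq_sum_div_card, Nat.card_Icc, Nat.add_sub_cancel, one_div_mul_eq_div]

variable {m i r : ℕ} {x : ℝ}

lemma betaCDF_mem_Ioo (hi : i ∈ Icc 1 m) (hx₀ : 0 < x) (hx₁ : x < 1) :
    betaCDF m i x ∈ Set.Ioo 0 1 := by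
  obtain ⟨n, rfl⟩ : ∃ n, m = n + 1 := ⟨m - 1, by grind⟩
  obtain ⟨k, rfl⟩ : ∃ k, i = k + 1 := ⟨i - 1, by grind⟩
  have hk : k ≤ n := by grind
  have hnonneg : ∀ j, 0 ≤ (bernsteinPolynomial ℝ (n + 1) (j + 1)).eval x :=
    fun j => bernsteinPolynomial.eval_nonneg _ _ hx₀.le hx₁.le
  rw [betaCDF_succ_succ hk]
  constructor
  · refine sum_pos' (fun j _ => hnonneg j) ⟨n, by simp [hk], ?_⟩
    simp only [bernsteinPolynomial, eval_mul, eval_natCast, eval_pow, eval_X, eval_one,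
      Nat.choose_self, Nat.sub_self, pow_zero]
    positivity
  · calc ∑ j ∈ Ico k (n + 1), (bernsteinPolynomial ℝ (n + 1) (j + 1)).eval x
        ≤ ∑ j ∈ range (n + 1), (bernsteinPolynomial ℝ (n + 1) (j + 1)).eval x :=
          sum_le_sum_of_subset_of_nonneg (fun j hj => mem_range.mpr (mem_Ico.mp hj).2)
            fun j _ _ => hnonneg j
      _ = 1 - (1 - x) ^ (n + 1) := bernsteinPolynomial.sum_range_eval_succ n x
      _ < 1 := by
          have : 0 < 1 - x := by linarith
          linarith [pow_pos this (n + 1)]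

lemma betaPDF_pos (hi : i ∈ Icc 1 m) (hx₀ : 0 < x) (hx₁ : x < 1) : 0 < betaPDF m i x := by
  rw [mem_Icc] at hi
  have : 0 < 1 - x := by linarith
  have : 0 < (m.choose i : ℝ) := by exact_mod_cast Nat.choose_pos hi.2
  have : (0 : ℝ) < i := by exact_mod_cast hi.1
  unfold betaPDF
  positivity

lemma strataCDF_mem_Ioo (hr : r ∈ Icc 1 m) (hx₀ : 0 < x) (hx₁ : x < 1) :
    strataCDF m r x ∈ Set.Ioo 0 1 := by
  have hsub : Icc 1 r ⊆ Icc 1 m := Icc_subset_Icc_right (mem_Icc.mp hr).2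
  have hne : (Icc 1 r).Nonempty := nonempty_Icc.mpr (mem_Icc.mp hr).1
  have hB : ∀ i ∈ Icc 1 r, betaCDF m i x ∈ Set.Ioo 0 1 :=
    fun i hi => betaCDF_mem_Ioo (hsub hi) hx₀ hx₁
  rw [strataCDF, one_div_mul_sum_Icc_eq_expect]
  exact ⟨expect_pos (fun i hi => (hB i hi).1) hne,
    expect_lt (fun i hi => (hB i hi).2.le) (hne.exists_mem.imp fun i hi => ⟨hi, (hB i hi).2⟩)⟩

lemma strataPDF_pos (hr : r ∈ Icc 1 m) (hx₀ : 0 < x) (hx₁ : x < 1) : 0 < strataPDF m r x := by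
  have hsub : Icc 1 r ⊆ Icc 1 m := Icc_subset_Icc_right (mem_Icc.mp hr).2
  rw [strataPDF, one_div_mul_sum_Icc_eq_expect]
  exact expect_pos (fun i hi => betaPDF_pos (hsub hi) hx₀ hx₁) (nonempty_Icc.mpr (mem_Icc.mp hr).1)

lemma strataCDF_eq_integral (m r : ℕ) (x : ℝ) :
    strataCDF m r x = ∫ u in (0 : ℝ)..x, strataPDF m r u := by
  have hcont : ∀ i, Continuous (betaPDF m i) := fun i => by unfold betaPDF; fun_prop
  simp only [strataCDF, strataPDF, betaCDF_eq_integral]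
  rw [intervalIntegral.integral_const_mul, intervalIntegral.integral_finsetSum
    fun i _ => (hcont i).intervalIntegrable _ _]

lemma strataPDF_one (m : ℕ) (x : ℝ) : strataPDF m 1 x = m * (1 - x) ^ (m - 1) := by
  simp [strataPDF, betaPDF]

lemma strataCDF_one (hm : 1 ≤ m) (x : ℝ) : strataCDF m 1 x = 1 - (1 - x) ^ m := by
  obtain ⟨n, rfl⟩ : ∃ n, m = n + 1 := ⟨m - 1, by omega⟩
  simp [strataCDF, betaCDF_succ_succ (Nat.zero_le n), bernsteinPolynomial.sum_range_eval_succ]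

lemma strataPDF_self (hm : 1 ≤ m) (x : ℝ) : strataPDF m m x = 1 := by
  obtain ⟨n, rfl⟩ : ∃ n, m = n + 1 := ⟨m - 1, by omega⟩
  have h := congrArg (eval x) (bernsteinPolynomial.sum ℝ n)
  rw [eval_finsetSum, eval_one] at h
  rw [strataPDF, sum_Icc_one_eq_sum_range]
  simp_rw [betaPDF_succ_succ, ← mul_sum, h]
  push_cast
  field_simp

lemma strataCDF_self (hm : 1 ≤ m) (x : ℝ) : strataCDF m m x = x := by
  simp [strataCDF_eq_integral, strataPDF_self hm]

end Strata

theorem Finset.sq_sum_div_lt_sum_sq_div {ι : Type*} {s : Finset ι} (f : ι → ℝ) {g : ι → ℝ}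
    (hg : ∀ i ∈ s, 0 < g i) {u v : ι} (hu : u ∈ s) (hv : v ∈ s) (huv : f u / g u ≠ f v / g v) :
    (∑ i ∈ s, f i) ^ 2 / ∑ i ∈ s, g i < ∑ i ∈ s, f i ^ 2 / g i := by
  have hG : 0 < ∑ i ∈ s, g i := sum_pos hg ⟨u, hu⟩
  -- The gap between the two sides is `∑ (f - θ g)² / g` for this `θ`.
  set θ := (∑ i ∈ s, f i) / ∑ i ∈ s, g i with hθ
  have hterm : ∀ i ∈ s, (f i - θ * g i) ^ 2 / g i = f i ^ 2 / g i - 2 * θ * f i + θ ^ 2 * g i :=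
    fun i hi => by field_simp [(hg i hi).ne']; ring
  obtain ⟨w, hw, hwθ⟩ : ∃ w ∈ s, f w / g w ≠ θ := by
    by_contra! h
    exact huv ((h u hu).trans (h v hv).symm)
  have hpos : 0 < ∑ i ∈ s, (f i - θ * g i) ^ 2 / g i := by
    refine sum_pos' (fun i hi => div_nonneg (sq_nonneg _) (hg i hi).le) ⟨w, hw, ?_⟩
    have : f w - θ * g w ≠ 0 := fun h => hwθ (by rw [div_eq_iff (hg w hw).ne']; linarith)
    exact div_pos (sq_pos_of_ne_zero this) (hg w hw)
  rw [sum_congr rfl hterm, sum_add_distrib, sum_sub_distrib, ← mul_sum, ← mul_sum] at hpos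
  have hθG : θ * ∑ i ∈ s, g i = ∑ i ∈ s, f i := div_mul_cancel₀ _ hG.ne'
  have hθF : (∑ i ∈ s, f i) ^ 2 / ∑ i ∈ s, g i = θ * ∑ i ∈ s, f i := by
    rw [hθ]; ring
  linear_combination hpos + hθF + θ * hθG

theorem Finset.one_lt_card_of_sum_eq {ι M : Type*} [AddCommMonoid M] {s : Finset ι} {f : ι → M}
    {a : M} (ha : a ≠ 0) (hf : ∀ i ∈ s, f i ≠ a) (hs : ∑ i ∈ s, f i = a) : 1 < #s := by
  by_contra! h
  obtain ⟨i, hi⟩ : s.Nonempty := nonempty_of_sum_ne_zero (hs ▸ ha)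
  rw [eq_singleton_iff_unique_mem.mpr ⟨hi, fun j hj => card_le_one.mp h j hj i hi⟩,
    sum_singleton] at hs
  exact hf i hi hs

lemma one_sub_mul_lt_one_sub_pow {m : ℕ} (hm : 2 ≤ m) {x : ℝ} (hx₀ : x ≠ 0) (hx₁ : x ≤ 1) :
    1 - m * x < (1 - x) ^ m := by
  have h := one_add_mul_self_lt_rpow_one_add (s := -x) (by linarith) (neg_ne_zero.mpr hx₀)
    (p := m) (by exact_mod_cast hm)
  rw [Real.rpow_natCast] at h
  linear_combination h

lemma strataPDF_div_variance_one_ne_self {m : ℕ} (hm : 2 ≤ m) {x : ℝ} (hx₀ : 0 < x)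
    (hx₁ : x < 1) :
    strataPDF m 1 x / (strataCDF m 1 x * (1 - strataCDF m 1 x)) ≠
      strataPDF m m x / (strataCDF m m x * (1 - strataCDF m m x)) := by
  have hm₁ : 1 ≤ m := by omega
  rw [strataPDF_one, strataCDF_one hm₁, strataPDF_self hm₁, strataCDF_self hm₁]
  have h₁x : 0 < 1 - x := by linarith
  have hq : 0 < (1 - x) ^ m := by positivity
  have hq₁ : 0 < 1 - (1 - x) ^ m := sub_pos.mpr (pow_lt_one₀ h₁x.le (by linarith) (by omega))
  have hpow : (1 - x) ^ (m - 1) * (1 - x) = (1 - x) ^ m := pow_sub_one_mul (by omega) _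
  have hB := one_sub_mul_lt_one_sub_pow hm hx₀.ne' hx₁.le
  rw [ne_eq, div_eq_div_iff (mul_pos hq₁ (by linarith)).ne' (mul_pos hx₀ h₁x).ne']
  intro h
  have : (m * x - (1 - (1 - x) ^ m)) * (1 - x) ^ m = 0 := by
    linear_combination h - ↑m * x * hpow
  rcases mul_eq_zero.mp this with h' | h'
  · linarith
  · exact hq.ne' h'

lemma sigmaMLsq_lt_sigmaMBsq {m : ℕ} (hm : 2 ≤ m) {lam : ℕ → ℝ}
    (hlam : ∀ r ∈ Icc 1 m, 0 < lam r) {x : ℝ} (hx₀ : 0 < x) (hx₁ : x < 1) :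
    sigmaMLsq m lam x < sigmaMBsq m lam x := by
  set b := fun r => strataPDF m r x
  set V := fun r => strataCDF m r x * (1 - strataCDF m r x)
  have h₁ : 1 ∈ Icc 1 m := by simp; omega
  have hₘ : m ∈ Icc 1 m := by simp; omega
  have hD : 0 < ∑ r ∈ Icc 1 m, lam r * b r :=
    sum_pos (fun r hr => mul_pos (hlam r hr) (strataPDF_pos hr hx₀ hx₁)) ⟨1, h₁⟩
  have hlamV : ∀ r ∈ Icc 1 m, 0 < lam r * V r := fun r hr =>
    have h := strataCDF_mem_Ioo hr hx₀ hx₁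
    mul_pos (hlam r hr) (mul_pos h.1 (sub_pos.mpr h.2))
  have hne : lam 1 * b 1 / (lam 1 * V 1) ≠ lam m * b m / (lam m * V m) := by
    rw [mul_div_mul_left _ _ (hlam 1 h₁).ne', mul_div_mul_left _ _ (hlam m hₘ).ne']
    exact strataPDF_div_variance_one_ne_self hm hx₀ hx₁
  have hCS := sq_sum_div_lt_sum_sq_div (fun r => lam r * b r) hlamV h₁ hₘ hne
  have hMB : sigmaMBsq m lam x =
      ((∑ r ∈ Icc 1 m, lam r * b r) ^ 2 / ∑ r ∈ Icc 1 m, lam r * V r)⁻¹ := by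
    rw [inv_div, sigmaMBsq]
    exact congrArg (· / _) (sum_congr rfl fun r _ => mul_assoc _ _ _)
  have hML : sigmaMLsq m lam x = (∑ r ∈ Icc 1 m, (lam r * b r) ^ 2 / (lam r * V r))⁻¹ := by
    rw [sigmaMLsq]
    refine congrArg _ (sum_congr rfl fun r hr => ?_)
    rw [mul_pow, sq (lam r), mul_assoc, mul_div_mul_left _ _ (hlam r hr).ne', mul_div_assoc]
  rw [hMB, hML]
  exact inv_strictAnti₀ (div_pos (pow_pos hD 2) (sum_pos hlamV ⟨1, h₁⟩)) hCS

theorem sigmaML_le_sigmaMB_general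
    (m : ℕ) (lam : ℕ → ℝ)
    (hlam : ∀ r ∈ Finset.Icc 1 m, lam r ∈ Set.Ioo (0:ℝ) 1)
    (hsum : ∑ r ∈ Finset.Icc 1 m, lam r = 1)
    (F : ℝ → ℝ) (t : ℝ) (hFt : F t ∈ Set.Ioo (0:ℝ) 1) :
    sigmaMLsq m lam (F t) ≤ sigmaMBsq m lam (F t) ∧
    (sigmaMLsq m lam (F t) = sigmaMBsq m lam (F t)
      ↔ m = 1 ∨ ∃ r ∈ Finset.Icc 1 m, lam r = 1) := by
  have hm : 1 < m := by
    simpa using one_lt_card_of_sum_eq one_ne_zero (fun r hr => (hlam r hr).2.ne) hsum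
  have hlt := sigmaMLsq_lt_sigmaMBsq hm (fun r hr => (hlam r hr).1) hFt.1 hFt.2
  refine ⟨hlt.le, iff_of_false hlt.ne ?_⟩
  rintro (rfl | ⟨r, hr, hr₁⟩)
  · exact hm.false
  · exact (hlam r hr).2.ne hr₁

/-- **The ML estimator is asymptotically at least as efficient as the moment-based
estimator.** Under perfect-ranking MinPNS with set size `m`, stratum proportions
`λ_r ∈ (0,1)` summing to `1`, and `F(t) ∈ (0,1)`, one has `σ_ml²(t) ≤ σ_mb²(t)`, with
equality iff `m = 1` or `λ_r = 1` for some `r`. -/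
theorem sigmaML_le_sigmaMB
    (m : ℕ) (hm : 1 ≤ m) (lam : ℕ → ℝ)
    (hlam : ∀ r ∈ Finset.Icc 1 m, lam r ∈ Set.Ioo (0:ℝ) 1)
    (hsum : ∑ r ∈ Finset.Icc 1 m, lam r = 1)
    (F : ℝ → ℝ) (t : ℝ) (hFt : F t ∈ Set.Ioo (0:ℝ) 1) :
    sigmaMLsq m lam (F t) ≤ sigmaMBsq m lam (F t) ∧
    (sigmaMLsq m lam (F t) = sigmaMBsq m lam (F t)
      ↔ m = 1 ∨ ∃ r ∈ Finset.Icc 1 m, lam r = 1) :=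
  sigmaML_le_sigmaMB_general m lam hlam hsum F t hFt
end
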